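/- The map x ↦ ω̂_T(x), sending a point to its set of distribution (quasi-generated) measures, is uniformly continuous from (X, Ē) to the space of nonempty closed subsets of M_T(X) with the Hausdorff metric induced by the Prokhorov metric: for every ε > 0 there is δ > 0 such that Ē(x,y) < δ implies ρ_H(ω̂_T(x), ω̂_T(y)) < ε. -/

import Mathlib

set_option linter.unusedSectionVars false
set_option linter.unusedVariables false
set_option linter.unnecessarySimpa false
set_option maxHeartbeats 1000000

open Filter MeasureTheory Topology
open scoped ENNReal NNReal

noncomputable def EnDist {X : Type*} [MetricSpace X] (T : X → X) (n : ℕ) (x y : X) : ℝ :=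
  ⨅ σ : Equiv.Perm (Fin n), (1 / (n : ℝ)) * ∑ k : Fin n, dist (T^[(k : ℕ)] x) (T^[((σ k) : ℕ)] y)

/-- The mean orbital pseudo-metric `Ē(x,y) = limsup_n Ē_n(x,y)`. -/
noncomputable def Ebar {X : Type*} [MetricSpace X] (T : X → X) (x y : X) : ℝ :=
  Filter.limsup (fun n => EnDist T n x y) Filter.atTop

/-- The empirical measure `m_T(x,n) = (1/n) Σ_{j<n} δ_{T^j x}`. -/
noncomputable def empMeas {X : Type*} [MeasurableSpace X] (T : X → X) (x : X) (n : ℕ) :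
    Measure X :=
  ((n : ℝ≥0∞))⁻¹ • ∑ j ∈ Finset.range n, MeasureTheory.Measure.dirac (T^[j] x)

/-- The empirical measure `m_T(x,n+1)` as a probability measure; the sequence
`n ↦ empProb T x n` is the sequence of empirical measures of `x`. -/
noncomputable def empProb {X : Type*} [MeasurableSpace X] (T : X → X) (x : X) (n : ℕ) :
    ProbabilityMeasure X :=
  ⟨empMeas T x (n + 1), by
    constructor
    rw [empMeas, Measure.smul_apply, Measure.finset_sum_apply]
    simp only [measure_univ, Finset.sum_const, Finset.card_range, nsmul_eq_mul, mul_one,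
      smul_eq_mul]
    rw [ENNReal.inv_mul_cancel (by exact_mod_cast Nat.succ_ne_zero n) (by simp)]⟩

/-- `ω̂_T(x)`: the set of measures quasi-generated by `x`, i.e. the weak* limit points of
the sequence of empirical measures of `x`. -/
noncomputable def omegaHat {X : Type*} [MetricSpace X] [MeasurableSpace X]
    [OpensMeasurableSpace X] (T : X → X) (x : X) : Set (ProbabilityMeasure X) :=
  {μ | MapClusterPt μ Filter.atTop (empProb T x)}

/-- The Prokhorov metric on probability measures. -/
noncomputable def rhoP {X : Type*} [MetricSpace X] [MeasurableSpace X]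
    (μ ν : ProbabilityMeasure X) : ℝ :=
  levyProkhorovDist μ.toMeasure ν.toMeasure

/-- The Hausdorff distance induced by the Prokhorov metric. -/
noncomputable def rhoH {X : Type*} [MetricSpace X] [MeasurableSpace X]
    (A B : Set (ProbabilityMeasure X)) : ℝ :=
  max (sSup ((fun μ => sInf ((fun ν => rhoP μ ν) '' B)) '' A)) (sSup ((fun ν => sInf ((fun μ => rhoP μ ν) '' A)) '' B))


namespace OmegaHatAux

open Metric Set

section Compactness

variable {X : Type*} [MetricSpace X] [CompactSpace X] [MeasurableSpace X] [BorelSpace X]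


variable {X : Type*} [MetricSpace X] [CompactSpace X] [MeasurableSpace X] [BorelSpace X]

/-- Ultrafilter limit of `ρ ↦ ρ A`. -/
noncomputable def ulim (𝒰 : Ultrafilter (ProbabilityMeasure X)) (A : Set X) : ℝ≥0∞ :=
  (𝒰.map (fun ρ : ProbabilityMeasure X => ρ.toMeasure A)).lim

lemma tendsto_ulim (𝒰 : Ultrafilter (ProbabilityMeasure X)) (A : Set X) :
    Tendsto (fun ρ : ProbabilityMeasure X => ρ.toMeasure A) (𝒰 : Filter (ProbabilityMeasure X))
      (𝓝 (ulim 𝒰 A)) := by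
  have := (𝒰.map (fun ρ : ProbabilityMeasure X => ρ.toMeasure A)).le_nhds_lim
  rwa [Ultrafilter.coe_map] at this

lemma ulim_mono (𝒰 : Ultrafilter (ProbabilityMeasure X)) {A B : Set X} (h : A ⊆ B) :
    ulim 𝒰 A ≤ ulim 𝒰 B :=
  le_of_tendsto_of_tendsto' (tendsto_ulim 𝒰 A) (tendsto_ulim 𝒰 B)
    (fun ρ => measure_mono h)

lemma ulim_le_one (𝒰 : Ultrafilter (ProbabilityMeasure X)) (A : Set X) :
    ulim 𝒰 A ≤ 1 :=
  le_of_tendsto' (tendsto_ulim 𝒰 A) (fun ρ => prob_le_one)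

lemma ulim_ne_top (𝒰 : Ultrafilter (ProbabilityMeasure X)) (A : Set X) :
    ulim 𝒰 A ≠ ∞ :=
  ((ulim_le_one 𝒰 A).trans_lt ENNReal.one_lt_top).ne

lemma ulim_empty (𝒰 : Ultrafilter (ProbabilityMeasure X)) : ulim 𝒰 (∅ : Set X) = 0 :=
  tendsto_nhds_unique (tendsto_ulim 𝒰 ∅) (by simpa using tendsto_const_nhds)

lemma ulim_univ (𝒰 : Ultrafilter (ProbabilityMeasure X)) : ulim 𝒰 (univ : Set X) = 1 :=
  tendsto_nhds_unique (tendsto_ulim 𝒰 univ) (by simpa using tendsto_const_nhds)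

lemma ulim_union (𝒰 : Ultrafilter (ProbabilityMeasure X)) {A B : Set X}
    (hd : Disjoint A B) (hB : MeasurableSet B) :
    ulim 𝒰 (A ∪ B) = ulim 𝒰 A + ulim 𝒰 B := by
  refine tendsto_nhds_unique (tendsto_ulim 𝒰 (A ∪ B)) ?_
  have : (fun ρ : ProbabilityMeasure X => ρ.toMeasure (A ∪ B))
      = fun ρ : ProbabilityMeasure X => ρ.toMeasure A + ρ.toMeasure B := by
    funext ρ; exact measure_union hd hB
  rw [this]
  exact (tendsto_ulim 𝒰 A).add (tendsto_ulim 𝒰 B)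

lemma ulim_union_le (𝒰 : Ultrafilter (ProbabilityMeasure X)) (A B : Set X) :
    ulim 𝒰 (A ∪ B) ≤ ulim 𝒰 A + ulim 𝒰 B :=
  le_of_tendsto_of_tendsto' (tendsto_ulim 𝒰 (A ∪ B))
    ((tendsto_ulim 𝒰 A).add (tendsto_ulim 𝒰 B)) (fun ρ => measure_union_le A B)

lemma ulim_biUnion_le (𝒰 : Ultrafilter (ProbabilityMeasure X)) {ι : Type*} (t : Finset ι)
    (U : ι → Set X) : ulim 𝒰 (⋃ i ∈ t, U i) ≤ ∑ i ∈ t, ulim 𝒰 (U i) := by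
  classical
  induction t using Finset.induction_on with
  | empty => simp [ulim_empty]
  | insert a s hnotmem ih =>
    rw [Finset.set_biUnion_insert, Finset.sum_insert hnotmem]
    exact (ulim_union_le 𝒰 _ _).trans (add_le_add le_rfl ih)

/-- The pre-measure used to construct the limit measure. -/
noncomputable def pre (𝒰 : Ultrafilter (ProbabilityMeasure X)) (A : Set X) : ℝ≥0∞ :=
  ⨅ (ε : ℝ) (_ : 0 < ε), ulim 𝒰 (thickening ε A)

lemma pre_le (𝒰 : Ultrafilter (ProbabilityMeasure X)) (A : Set X) {ε : ℝ} (hε : 0 < ε) :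
    pre 𝒰 A ≤ ulim 𝒰 (thickening ε A) :=
  (iInf_le _ ε).trans (iInf_le _ hε)

lemma pre_mono (𝒰 : Ultrafilter (ProbabilityMeasure X)) {A B : Set X} (h : A ⊆ B) :
    pre 𝒰 A ≤ pre 𝒰 B := by
  refine le_iInf fun ε => le_iInf fun hε => ?_
  exact (pre_le 𝒰 A hε).trans (ulim_mono 𝒰 (thickening_subset_of_subset ε h))

lemma pre_empty (𝒰 : Ultrafilter (ProbabilityMeasure X)) : pre 𝒰 (∅ : Set X) = 0 := by
  refine le_antisymm ?_ zero_le
  refine (pre_le 𝒰 ∅ one_pos).trans ?_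
  rw [thickening_empty, ulim_empty]

lemma pre_le_one (𝒰 : Ultrafilter (ProbabilityMeasure X)) (A : Set X) : pre 𝒰 A ≤ 1 :=
  (pre_le 𝒰 A one_pos).trans (ulim_le_one 𝒰 _)

/-- The outer measure obtained as an ultrafilter limit of probability measures. -/
noncomputable def om (𝒰 : Ultrafilter (ProbabilityMeasure X)) : OuterMeasure X :=
  OuterMeasure.ofFunction (pre 𝒰) (pre_empty 𝒰)



/-- Metric-separated sets admit disjoint thickenings. -/
lemma exists_disjoint_thickening {s t : Set X} (hst : Metric.AreSeparated s t) :
    ∃ r : ℝ, 0 < r ∧ Disjoint (thickening r s) (thickening r t) := by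
  obtain ⟨d, hd0, hsep⟩ := hst
  set e : ℝ≥0∞ := min d 1 with he
  have he0 : e ≠ 0 := (lt_min (pos_iff_ne_zero.mpr hd0) one_pos).ne'
  have hetop : e ≠ ∞ := (he ▸ (min_le_right d 1).trans_lt ENNReal.one_lt_top).ne
  refine ⟨e.toReal / 2, half_pos (ENNReal.toReal_pos he0 hetop), ?_⟩
  rw [Set.disjoint_left]
  rintro z hzs hzt
  obtain ⟨a, ha, hza⟩ := mem_thickening_iff.mp hzs
  obtain ⟨b, hb, hzb⟩ := mem_thickening_iff.mp hzt
  have hd2 : dist a b < e.toReal := by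
    calc dist a b ≤ dist a z + dist z b := dist_triangle a z b
    _ < e.toReal / 2 + e.toReal / 2 := by rw [dist_comm a z]; exact add_lt_add hza hzb
    _ = e.toReal := by ring
  have h1 : e ≤ edist a b := le_trans (min_le_left d 1) (hsep a ha b hb)
  have h2 : e.toReal ≤ dist a b := by
    rw [dist_edist]
    exact ENNReal.toReal_mono (edist_ne_top a b) h1
  exact absurd (h2.trans_lt hd2) (lt_irrefl _)

lemma pre_add_pre_le (𝒰 : Ultrafilter (ProbabilityMeasure X)) {s t : Set X}
    (hst : Metric.AreSeparated s t) (A : Set X) :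
    pre 𝒰 (A ∩ s) + pre 𝒰 (A ∩ t) ≤ pre 𝒰 A := by
  obtain ⟨r, hr0, hdis⟩ := exists_disjoint_thickening (X := X) hst
  refine le_iInf fun ε => le_iInf fun hε => ?_
  set ε' : ℝ := min ε r with hε'
  have hε'0 : 0 < ε' := lt_min hε hr0
  have hsub_s : thickening ε' (A ∩ s) ⊆ thickening r s :=
    (thickening_subset_of_subset ε' Set.inter_subset_right).trans
      (thickening_mono (min_le_right ε r) s)
  have hsub_t : thickening ε' (A ∩ t) ⊆ thickening r t :=
    (thickening_subset_of_subset ε' Set.inter_subset_right).trans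
      (thickening_mono (min_le_right ε r) t)
  have hdis' : Disjoint (thickening ε' (A ∩ s)) (thickening ε' (A ∩ t)) :=
    hdis.mono hsub_s hsub_t
  calc pre 𝒰 (A ∩ s) + pre 𝒰 (A ∩ t)
      ≤ ulim 𝒰 (thickening ε' (A ∩ s)) + ulim 𝒰 (thickening ε' (A ∩ t)) :=
        add_le_add (pre_le 𝒰 _ hε'0) (pre_le 𝒰 _ hε'0)
    _ = ulim 𝒰 (thickening ε' (A ∩ s) ∪ thickening ε' (A ∩ t)) :=
        (ulim_union 𝒰 hdis' isOpen_thickening.measurableSet).symm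
    _ ≤ ulim 𝒰 (thickening ε A) := by
        refine ulim_mono 𝒰 (Set.union_subset ?_ ?_) <;>
        · refine subset_trans (thickening_subset_of_subset ε' Set.inter_subset_left) ?_
          exact thickening_mono (min_le_left ε r) A

/-- The outer measure `om` is a metric outer measure. -/
lemma om_isMetric (𝒰 : Ultrafilter (ProbabilityMeasure X)) :
    OuterMeasure.IsMetric (om 𝒰) := by
  intro s t hst
  refine le_antisymm (measure_union_le s t) ?_
  rw [om, OuterMeasure.ofFunction_apply (s := s ∪ t)]
  refine le_iInf fun f => le_iInf fun hf => ?_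
  calc om 𝒰 s + om 𝒰 t
      ≤ (∑' i, pre 𝒰 (f i ∩ s)) + ∑' i, pre 𝒰 (f i ∩ t) := by
        refine add_le_add ?_ ?_ <;>
        · rw [om, OuterMeasure.ofFunction_apply]
          refine iInf₂_le _ (fun x hx => ?_)
          first
          | · obtain ⟨i, hi⟩ := mem_iUnion.mp (hf (Or.inl hx))
              exact mem_iUnion.mpr ⟨i, hi, hx⟩
          | · obtain ⟨i, hi⟩ := mem_iUnion.mp (hf (Or.inr hx))
              exact mem_iUnion.mpr ⟨i, hi, hx⟩
    _ = ∑' i, (pre 𝒰 (f i ∩ s) + pre 𝒰 (f i ∩ t)) := ENNReal.tsum_add.symm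
    _ ≤ ∑' i, pre 𝒰 (f i) := ENNReal.tsum_le_tsum fun i => pre_add_pre_le 𝒰 hst (f i)


lemma om_le_pre (𝒰 : Ultrafilter (ProbabilityMeasure X)) (A : Set X) : om 𝒰 A ≤ pre 𝒰 A :=
  OuterMeasure.ofFunction_le A

lemma om_le_one (𝒰 : Ultrafilter (ProbabilityMeasure X)) (A : Set X) : om 𝒰 A ≤ 1 :=
  (om_le_pre 𝒰 A).trans (pre_le_one 𝒰 A)

lemma ulim_le_om_of_isClosed (𝒰 : Ultrafilter (ProbabilityMeasure X)) {F : Set X}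
    (hF : IsClosed F) : ulim 𝒰 F ≤ om 𝒰 F := by
  refine ENNReal.le_of_forall_pos_le_add fun ε hε hom => ?_
  obtain ⟨δ, hδ0, hδsum⟩ :=
    ENNReal.exists_pos_sum_of_countable (ε := (ε : ℝ≥0∞) / 2)
      (by simp [ENNReal.div_eq_top, hε.ne']) ℕ
  -- choose a cover almost realizing `om 𝒰 F`
  have hlt : om 𝒰 F < om 𝒰 F + (ε : ℝ≥0∞) / 2 := by
    refine ENNReal.lt_add_right hom.ne ?_
    simp [hε.ne']
  rw [om, OuterMeasure.ofFunction_apply] at hlt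
  obtain ⟨f, hlt⟩ := iInf_lt_iff.mp (lt_of_le_of_lt (le_refl _) hlt)
  obtain ⟨hfc, hflt⟩ := iInf_lt_iff.mp hlt
  -- for each i, choose a good thickening radius
  have hchoice : ∀ i : ℕ, ∃ r : ℝ, 0 < r ∧
      ulim 𝒰 (thickening r (f i)) ≤ pre 𝒰 (f i) + δ i := by
    intro i
    have h1 : pre 𝒰 (f i) < pre 𝒰 (f i) + δ i := by
      refine ENNReal.lt_add_right ((pre_le_one 𝒰 (f i)).trans_lt ENNReal.one_lt_top).ne ?_
      exact_mod_cast (hδ0 i).ne'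
    rw [pre] at h1
    obtain ⟨r, hr⟩ := iInf_lt_iff.mp (lt_of_le_of_lt (le_refl _) h1)
    obtain ⟨hr0, hrlt⟩ := iInf_lt_iff.mp hr
    exact ⟨r, hr0, hrlt.le⟩
  choose r hr0 hrle using hchoice
  -- compactness: finite subcover by the thickenings
  have hFsub : F ⊆ ⋃ i : ℕ, thickening (r i) (f i) := fun x hx => by
    obtain ⟨i, hi⟩ := mem_iUnion.mp (hfc hx)
    exact mem_iUnion.mpr ⟨i, self_subset_thickening (hr0 i) (f i) hi⟩
  obtain ⟨t, ht⟩ := (hF.isCompact).elim_finite_subcover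
    (fun i : ℕ => thickening (r i) (f i)) (fun i => isOpen_thickening) hFsub
  calc ulim 𝒰 F ≤ ulim 𝒰 (⋃ i ∈ t, thickening (r i) (f i)) := ulim_mono 𝒰 ht
    _ ≤ ∑ i ∈ t, ulim 𝒰 (thickening (r i) (f i)) := ulim_biUnion_le 𝒰 t _
    _ ≤ ∑ i ∈ t, (pre 𝒰 (f i) + δ i) := Finset.sum_le_sum fun i _ => hrle i
    _ = (∑ i ∈ t, pre 𝒰 (f i)) + ∑ i ∈ t, (δ i : ℝ≥0∞) := Finset.sum_add_distrib
    _ ≤ (∑' i, pre 𝒰 (f i)) + (ε : ℝ≥0∞) / 2 :=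
        add_le_add (ENNReal.sum_le_tsum t) ((ENNReal.sum_le_tsum t).trans hδsum.le)
    _ ≤ (om 𝒰 F + (ε : ℝ≥0∞) / 2) + (ε : ℝ≥0∞) / 2 := add_le_add hflt.le le_rfl
    _ = om 𝒰 F + (ε : ℝ≥0∞) := by rw [add_assoc, ENNReal.add_halves]

lemma om_univ (𝒰 : Ultrafilter (ProbabilityMeasure X)) : om 𝒰 (univ : Set X) = 1 := by
  refine le_antisymm (om_le_one 𝒰 univ) ?_
  calc (1 : ℝ≥0∞) = ulim 𝒰 univ := (ulim_univ 𝒰).symm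
    _ ≤ om 𝒰 univ := ulim_le_om_of_isClosed 𝒰 isClosed_univ

/-- The limit measure of an ultrafilter of probability measures. -/
noncomputable def limMeasure (𝒰 : Ultrafilter (ProbabilityMeasure X)) : Measure X :=
  (om 𝒰).toMeasure
    (le_of_eq_of_le (BorelSpace.measurable_eq (α := X)) (om_isMetric 𝒰).borel_le_caratheodory)

lemma limMeasure_apply (𝒰 : Ultrafilter (ProbabilityMeasure X)) {B : Set X}
    (hB : MeasurableSet B) : limMeasure 𝒰 B = om 𝒰 B :=
  toMeasure_apply _ _ hB

instance limMeasure_isProbability (𝒰 : Ultrafilter (ProbabilityMeasure X)) :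
    IsProbabilityMeasure (limMeasure 𝒰) :=
  ⟨by rw [limMeasure_apply 𝒰 MeasurableSet.univ, om_univ]⟩

/-- The limit of an ultrafilter of probability measures, as a probability measure. -/
noncomputable def limProb (𝒰 : Ultrafilter (ProbabilityMeasure X)) : ProbabilityMeasure X :=
  ⟨limMeasure 𝒰, limMeasure_isProbability 𝒰⟩

lemma ulim_closed_le_limProb (𝒰 : Ultrafilter (ProbabilityMeasure X)) {F : Set X}
    (hF : IsClosed F) : ulim 𝒰 F ≤ (limProb 𝒰).toMeasure F := by
  rw [show (limProb 𝒰).toMeasure = limMeasure 𝒰 from rfl,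
    limMeasure_apply 𝒰 hF.measurableSet]
  exact ulim_le_om_of_isClosed 𝒰 hF

lemma limProb_open_le_ulim (𝒰 : Ultrafilter (ProbabilityMeasure X)) {G : Set X}
    (hG : IsOpen G) : (limProb 𝒰).toMeasure G ≤ ulim 𝒰 G := by
  have h1 : (limProb 𝒰).toMeasure G + (limProb 𝒰).toMeasure Gᶜ = 1 := by
    rw [← measure_union (disjoint_compl_right) hG.isClosed_compl.measurableSet,
      Set.union_compl_self, measure_univ]
  have h2 : ulim 𝒰 G + ulim 𝒰 Gᶜ = 1 := by
    rw [← ulim_union 𝒰 disjoint_compl_right hG.isClosed_compl.measurableSet,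
      Set.union_compl_self, ulim_univ]
  have h3 : ulim 𝒰 Gᶜ ≤ (limProb 𝒰).toMeasure Gᶜ :=
    ulim_closed_le_limProb 𝒰 hG.isClosed_compl
  have h4 : (limProb 𝒰).toMeasure G + (limProb 𝒰).toMeasure Gᶜ ≤
      ulim 𝒰 G + (limProb 𝒰).toMeasure Gᶜ := by
    rw [h1, ← h2]
    exact add_le_add le_rfl h3
  exact ENNReal.add_le_add_iff_right (measure_ne_top _ _) |>.mp h4


lemma eventually_levyProkhorovDist_lt (𝒰 : Ultrafilter (ProbabilityMeasure X)) {r : ℝ}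
    (hr : 0 < r) :
    ∀ᶠ ρ : ProbabilityMeasure X in (𝒰 : Filter (ProbabilityMeasure X)),
      levyProkhorovDist ρ.toMeasure (limProb 𝒰).toMeasure < r := by
  classical
  set ν := limProb 𝒰 with hν
  -- finite net of radius r/8
  obtain ⟨tset, -, htfin, htcov⟩ :=
    finite_cover_balls_of_compact (isCompact_univ (X := X)) (show 0 < r / 8 by positivity)
  set tf : Finset X := htfin.toFinset with htf
  have htcov' : (univ : Set X) ⊆ ⋃ c ∈ tf, ball c (r / 8) := by
    simpa [htf, Set.Finite.mem_toFinset] using htcov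
  set UU : Finset X → Set X := fun J => ⋃ c ∈ J, ball c (r / 8) with hUU
  set CC : Finset X → Set X := fun J => ⋃ c ∈ J, closedBall c (r / 8) with hCC
  have hUopen : ∀ J, IsOpen (UU J) := fun J => isOpen_biUnion fun c _ => isOpen_ball
  have hCclosed : ∀ J, IsClosed (CC J) := fun J =>
    Set.Finite.isClosed_biUnion (J.finite_toSet) fun c _ => isClosed_closedBall
  have hUC : ∀ J, UU J ⊆ CC J := fun J =>
    Set.iUnion₂_mono fun c _ => ball_subset_closedBall
  -- the two families of events, for every subset of the net
  have hev : ∀ J ∈ tf.powerset, ∀ᶠ ρ : ProbabilityMeasure X in 𝒰,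
      (ρ.toMeasure (CC J) < ν.toMeasure (CC J) + ENNReal.ofReal (r / 4)) ∧
      (ν.toMeasure (UU J) < ρ.toMeasure (UU J) + ENNReal.ofReal (r / 4)) := by
    intro J _
    have hr4 : (0 : ℝ≥0∞) < ENNReal.ofReal (r / 4) := by
      simp [ENNReal.ofReal_pos]; positivity
    have h1 : ∀ᶠ ρ : ProbabilityMeasure X in 𝒰,
        ρ.toMeasure (CC J) < ν.toMeasure (CC J) + ENNReal.ofReal (r / 4) := by
      refine (tendsto_ulim 𝒰 (CC J)).eventually_lt_const ?_
      calc ulim 𝒰 (CC J) ≤ ν.toMeasure (CC J) := ulim_closed_le_limProb 𝒰 (hCclosed J)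
        _ < ν.toMeasure (CC J) + ENNReal.ofReal (r / 4) :=
            ENNReal.lt_add_right (measure_ne_top _ _) hr4.ne'
    have h2 : ∀ᶠ ρ : ProbabilityMeasure X in 𝒰,
        ν.toMeasure (UU J) < ρ.toMeasure (UU J) + ENNReal.ofReal (r / 4) := by
      have htend : Tendsto (fun ρ : ProbabilityMeasure X =>
          ρ.toMeasure (UU J) + ENNReal.ofReal (r / 4)) (𝒰 : Filter (ProbabilityMeasure X))
          (𝓝 (ulim 𝒰 (UU J) + ENNReal.ofReal (r / 4))) :=
        (tendsto_ulim 𝒰 (UU J)).add tendsto_const_nhds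
      refine htend.eventually_const_lt ?_
      calc ν.toMeasure (UU J) ≤ ulim 𝒰 (UU J) := limProb_open_le_ulim 𝒰 (hUopen J)
        _ < ulim 𝒰 (UU J) + ENNReal.ofReal (r / 4) :=
            ENNReal.lt_add_right (ulim_ne_top 𝒰 _) hr4.ne'
    exact h1.and h2
  have hevall : ∀ᶠ ρ : ProbabilityMeasure X in 𝒰, ∀ J ∈ tf.powerset,
      (ρ.toMeasure (CC J) < ν.toMeasure (CC J) + ENNReal.ofReal (r / 4)) ∧
      (ν.toMeasure (UU J) < ρ.toMeasure (UU J) + ENNReal.ofReal (r / 4)) :=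
    (Filter.eventually_all_finset tf.powerset).mpr hev
  filter_upwards [hevall] with ρ hρ
  -- conclude the Lévy-Prokhorov bound for such ρ
  have key : levyProkhorovEDist ρ.toMeasure ν.toMeasure ≤ ENNReal.ofReal (r / 2) := by
    refine levyProkhorovEDist_le_of_forall _ _ _ (fun ε B hε hεtop hB => ?_)
    set J : Finset X := tf.filter (fun c => (ball c (r / 8) ∩ B).Nonempty) with hJ
    have hJmem : J ∈ tf.powerset := Finset.mem_powerset.mpr (Finset.filter_subset _ _)
    have hBU : B ⊆ UU J := by
      intro x hx
      obtain ⟨c, hc, hxc⟩ := Set.mem_iUnion₂.mp (htcov' (Set.mem_univ x))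
      refine Set.mem_iUnion₂.mpr ⟨c, ?_, hxc⟩
      exact Finset.mem_filter.mpr ⟨hc, ⟨x, hxc, hx⟩⟩
    have hCthick : CC J ⊆ thickening ε.toReal B := by
      intro z hz
      obtain ⟨c, hc, hzc⟩ := Set.mem_iUnion₂.mp hz
      obtain ⟨-, w, hwc, hwB⟩ := Finset.mem_filter.mp hc
      refine mem_thickening_iff.mpr ⟨w, hwB, ?_⟩
      have : dist z w ≤ r / 8 + r / 8 :=
        (dist_triangle z c w).trans (add_le_add hzc (le_of_lt (by rwa [dist_comm])))
      have hrε : r / 2 < ε.toReal := by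
        have := ENNReal.toReal_lt_toReal (ENNReal.ofReal_ne_top) hεtop.ne |>.mpr hε
        rwa [ENNReal.toReal_ofReal (by positivity)] at this
      linarith
    have hr4ε : ENNReal.ofReal (r / 4) ≤ ε :=
      le_trans (ENNReal.ofReal_le_ofReal (by linarith)) hε.le
    constructor
    · calc ρ.toMeasure B ≤ ρ.toMeasure (CC J) := measure_mono (hBU.trans (hUC J))
        _ ≤ ν.toMeasure (CC J) + ENNReal.ofReal (r / 4) := (hρ J hJmem).1.le
        _ ≤ ν.toMeasure (thickening ε.toReal B) + ε :=
            add_le_add (measure_mono hCthick) hr4ε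
    · calc ν.toMeasure B ≤ ν.toMeasure (UU J) := measure_mono hBU
        _ ≤ ρ.toMeasure (UU J) + ENNReal.ofReal (r / 4) := (hρ J hJmem).2.le
        _ ≤ ρ.toMeasure (thickening ε.toReal B) + ε :=
            add_le_add (measure_mono ((hUC J).trans hCthick)) hr4ε
  have : levyProkhorovDist ρ.toMeasure ν.toMeasure ≤ r / 2 := by
    rw [levyProkhorovDist]
    exact ENNReal.toReal_le_of_le_ofReal (by positivity) key
  linarith

lemma tendsto_limProb (𝒰 : Ultrafilter (ProbabilityMeasure X)) :
    Tendsto (fun ρ : ProbabilityMeasure X => ρ) (𝒰 : Filter (ProbabilityMeasure X))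
      (𝓝 (limProb 𝒰)) := by
  have hLP : Tendsto (fun ρ : ProbabilityMeasure X =>
      (LevyProkhorov.toMeasureEquiv (α := ProbabilityMeasure X)).symm ρ) (𝒰 : Filter (ProbabilityMeasure X))
      (𝓝 ((LevyProkhorov.toMeasureEquiv (α := ProbabilityMeasure X)).symm (limProb 𝒰))) := by
    rw [Metric.tendsto_nhds]
    intro r hr
    exact eventually_levyProkhorovDist_lt 𝒰 hr
  have := (LevyProkhorov.continuous_toMeasure_probabilityMeasure (Ω := X)).tendsto
    ((LevyProkhorov.toMeasureEquiv (α := ProbabilityMeasure X)).symm (limProb 𝒰))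
  exact this.comp hLP

/-- The space of Borel probability measures on a compact metric space is compact. -/
theorem compactSpace_probabilityMeasure : CompactSpace (ProbabilityMeasure X) := by
  refine ⟨?_⟩
  rw [isCompact_iff_ultrafilter_le_nhds]
  intro 𝒰 _
  exact ⟨limProb 𝒰, Set.mem_univ _, tendsto_limProb 𝒰⟩


end Compactness

section Coupling

variable {X : Type*} [MetricSpace X] [MeasurableSpace X] [OpensMeasurableSpace X]




open Classical in
/-- Computation of the empirical measure of a measurable set as a counting average. -/
lemma empMeas_apply (T : X → X) (x : X) (n : ℕ) {B : Set X} (hB : MeasurableSet B) :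
    empMeas T x n B
      = ((n : ℝ≥0∞))⁻¹ * (Finset.univ.filter (fun k : Fin n => T^[(k : ℕ)] x ∈ B)).card := by
  classical
  rw [empMeas, Measure.smul_apply, Measure.finset_sum_apply, smul_eq_mul]
  congr 1
  have : ∀ j ∈ Finset.range n, Measure.dirac (T^[j] x) B
      = if T^[j] x ∈ B then (1 : ℝ≥0∞) else 0 := by
    intro j _
    rw [Measure.dirac_apply' _ hB, Set.indicator_apply]
    simp
  rw [Finset.sum_congr rfl this, ← Fin.sum_univ_eq_sum_range (fun j => if T^[j] x ∈ B then (1 : ℝ≥0∞) else 0) n]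
  rw [Finset.sum_boole]

open Classical in
/-- Coupling estimate: if `EnDist T (n+1) x y < t ^ 2` then the empirical measures at time `n`
are within `t` in the Lévy-Prokhorov distance. -/
lemma levyProkhorovDist_empProb_le (T : X → X) (x y : X) (n : ℕ) {t : ℝ} (ht : 0 < t)
    (h : EnDist T (n + 1) x y < t ^ 2) :
    levyProkhorovDist (empProb T x n).toMeasure (empProb T y n).toMeasure ≤ t := by
  classical
  set m : ℕ := n + 1 with hm
  obtain ⟨σ, hσ⟩ := exists_lt_of_ciInf_lt h
  have hm0 : (0 : ℝ) < (m : ℝ) := by positivity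
  -- the set of badly matched indices
  set S : Finset (Fin m) :=
    Finset.univ.filter (fun k : Fin m => t ≤ dist (T^[(k : ℕ)] x) (T^[((σ k) : ℕ)] y)) with hS
  have hsum : ∑ k : Fin m, dist (T^[(k : ℕ)] x) (T^[((σ k) : ℕ)] y) < (m : ℝ) * t ^ 2 := by
    calc ∑ k : Fin m, dist (T^[(k : ℕ)] x) (T^[((σ k) : ℕ)] y)
        = (m : ℝ) * ((1 / (m : ℝ)) * ∑ k : Fin m, dist (T^[(k : ℕ)] x) (T^[((σ k) : ℕ)] y)) := by
          field_simp
      _ < (m : ℝ) * t ^ 2 := mul_lt_mul_of_pos_left hσ hm0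
  have hScard : (S.card : ℝ) * t ≤ (m : ℝ) * t ^ 2 := by
    have h1 : (S.card : ℝ) * t ≤ ∑ k ∈ S, dist (T^[(k : ℕ)] x) (T^[((σ k) : ℕ)] y) := by
      rw [mul_comm]
      have := Finset.card_nsmul_le_sum S
        (fun k => dist (T^[(k : ℕ)] x) (T^[((σ k) : ℕ)] y)) t
        (fun k hk => (Finset.mem_filter.mp hk).2)
      simpa [nsmul_eq_mul, mul_comm] using this
    have h2 : ∑ k ∈ S, dist (T^[(k : ℕ)] x) (T^[((σ k) : ℕ)] y)
        ≤ ∑ k : Fin m, dist (T^[(k : ℕ)] x) (T^[((σ k) : ℕ)] y) :=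
      Finset.sum_le_sum_of_subset_of_nonneg (Finset.subset_univ S)
        (fun k _ _ => dist_nonneg)
    linarith
  have hScard' : (S.card : ℝ) ≤ (m : ℝ) * t := by
    have := (mul_le_mul_iff_left₀ ht).mp (by linarith [hScard] : (S.card : ℝ) * t ≤ ((m : ℝ) * t) * t)
    exact this
  -- main Lévy-Prokhorov estimate
  refine levyProkhorovDist_le_of_forall_le _ _ ht.le (fun ε B hε hB => ?_)
  set A1 : Finset (Fin m) := Finset.univ.filter (fun k : Fin m => T^[(k : ℕ)] x ∈ B) with hA1
  set Q1 : Finset (Fin m) :=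
    Finset.univ.filter (fun k : Fin m => T^[(k : ℕ)] y ∈ thickening ε B) with hQ1
  have hcard : A1.card ≤ Q1.card + S.card := by
    have hsplit : (A1 \ S).card + (A1 ∩ S).card = A1.card := Finset.card_sdiff_add_card_inter A1 S
    have h1 : (A1 ∩ S).card ≤ S.card := Finset.card_le_card (Finset.inter_subset_right)
    rw [← hsplit]
    have h2 : (A1 \ S).card ≤ Q1.card := by
      refine Finset.card_le_card_of_injOn (fun k => σ k) ?_ ?_
      · intro k hk
        obtain ⟨hkA, hkS⟩ := Finset.mem_sdiff.mp hk
        have hxB : T^[(k : ℕ)] x ∈ B := (Finset.mem_filter.mp hkA).2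
        have hdist : dist (T^[(k : ℕ)] x) (T^[((σ k) : ℕ)] y) < t := by
          by_contra hcon
          exact hkS (Finset.mem_filter.mpr ⟨Finset.mem_univ k, not_lt.mp hcon⟩)
        refine Finset.mem_filter.mpr ⟨Finset.mem_univ _, ?_⟩
        refine mem_thickening_iff.mpr ⟨T^[(k : ℕ)] x, hxB, ?_⟩
        rw [dist_comm]
        exact hdist.trans hε
      · exact fun a _ b _ hab => σ.injective hab
    omega
  -- measure computations
  rw [show (empProb T x n).toMeasure = empMeas T x m from rfl,
    show (empProb T y n).toMeasure = empMeas T y m from rfl,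
    empMeas_apply T x m hB, empMeas_apply T y m isOpen_thickening.measurableSet]
  have hmtop : ((m : ℝ≥0∞)) ≠ ∞ := by simp
  have hmne : ((m : ℝ≥0∞)) ≠ 0 := by
    simp [hm]
  calc ((m : ℝ≥0∞))⁻¹ * (A1.card : ℝ≥0∞)
      ≤ ((m : ℝ≥0∞))⁻¹ * ((Q1.card : ℝ≥0∞) + (S.card : ℝ≥0∞)) := by
        refine mul_le_mul_right ?_ _
        exact_mod_cast hcard
    _ = ((m : ℝ≥0∞))⁻¹ * (Q1.card : ℝ≥0∞) + ((m : ℝ≥0∞))⁻¹ * (S.card : ℝ≥0∞) := by ring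
    _ ≤ ((m : ℝ≥0∞))⁻¹ * (Q1.card : ℝ≥0∞) + ENNReal.ofReal ε := by
        refine add_le_add le_rfl ?_
        have hcast : ((S.card : ℝ≥0∞)) ≤ ENNReal.ofReal ((m : ℝ) * t) := by
          rw [← ENNReal.ofReal_natCast]
          exact ENNReal.ofReal_le_ofReal hScard'
        calc ((m : ℝ≥0∞))⁻¹ * (S.card : ℝ≥0∞)
            ≤ ((m : ℝ≥0∞))⁻¹ * ENNReal.ofReal ((m : ℝ) * t) := mul_le_mul_right hcast _
          _ = ((m : ℝ≥0∞))⁻¹ * ((m : ℝ≥0∞) * ENNReal.ofReal t) := by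
              rw [ENNReal.ofReal_mul (by positivity), ENNReal.ofReal_natCast]
          _ = ENNReal.ofReal t := by
              rw [← mul_assoc, ENNReal.inv_mul_cancel hmne hmtop, one_mul]
          _ ≤ ENNReal.ofReal ε := ENNReal.ofReal_le_ofReal hε.le

end Coupling

section EbarBound

variable {X : Type*} [MetricSpace X] [CompactSpace X]

lemma enDist_le_diam (T : X → X) (n : ℕ) (x y : X) :
    EnDist T n x y ≤ Metric.diam (univ : Set X) := by
  rcases n with _ | n
  · have : EnDist T 0 x y = 0 := by
      rw [EnDist]
      simp
    rw [this]
    exact Metric.diam_nonneg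
  · have hbdd : BddBelow (Set.range fun σ : Equiv.Perm (Fin (n + 1)) =>
        (1 / ((n + 1 : ℕ) : ℝ)) * ∑ k : Fin (n + 1),
          dist (T^[(k : ℕ)] x) (T^[((σ k) : ℕ)] y)) := by
      refine ⟨0, fun r hr => ?_⟩
      obtain ⟨σ, rfl⟩ := hr
      positivity
    refine (ciInf_le hbdd (Equiv.refl _)).trans ?_
    have hterm : ∀ k : Fin (n + 1),
        dist (T^[(k : ℕ)] x) (T^[(((Equiv.refl (Fin (n+1))) k) : ℕ)] y)
          ≤ Metric.diam (univ : Set X) := fun k =>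
      Metric.dist_le_diam_of_mem (isCompact_univ.isBounded) (Set.mem_univ _) (Set.mem_univ _)
    calc (1 / ((n + 1 : ℕ) : ℝ)) * ∑ k : Fin (n + 1),
          dist (T^[(k : ℕ)] x) (T^[(((Equiv.refl (Fin (n+1))) k) : ℕ)] y)
        ≤ (1 / ((n + 1 : ℕ) : ℝ)) * ∑ _k : Fin (n + 1), Metric.diam (univ : Set X) := by
          refine mul_le_mul_of_nonneg_left ?_ (by positivity)
          exact Finset.sum_le_sum fun k _ => hterm k
      _ = Metric.diam (univ : Set X) := by
          rw [Finset.sum_const]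
          simp only [Finset.card_univ, Fintype.card_fin, nsmul_eq_mul]
          field_simp

lemma eventually_enDist_lt (T : X → X) {x y : X} {d : ℝ} (h : Ebar T x y < d) :
    ∀ᶠ n in atTop, EnDist T n x y < d := by
  refine Filter.eventually_lt_of_limsup_lt h ?_
  exact ⟨Metric.diam (univ : Set X), Filter.eventually_map.mpr
    (Filter.Eventually.of_forall fun n => enDist_le_diam T n x y)⟩

end EbarBound

section Main

variable {X : Type*} [MetricSpace X] [CompactSpace X] [MeasurableSpace X] [BorelSpace X]

/-- Transfer of cluster points along sequences that are eventually close in the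
Lévy-Prokhorov distance. -/
lemma exists_mapClusterPt_close {u v : ℕ → ProbabilityMeasure X} {μ : ProbabilityMeasure X}
    (hμ : MapClusterPt μ atTop u) {t : ℝ}
    (hclose : ∀ᶠ n in atTop, levyProkhorovDist (u n).toMeasure (v n).toMeasure ≤ t) :
    ∃ ν : ProbabilityMeasure X, MapClusterPt ν atTop v ∧
      levyProkhorovDist μ.toMeasure ν.toMeasure ≤ t := by
  haveI : CompactSpace (ProbabilityMeasure X) := compactSpace_probabilityMeasure
  have hne : (atTop ⊓ Filter.comap u (𝓝 μ)).NeBot := by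
    rw [← Filter.map_neBot_iff u, Filter.push_pull]
    have h1 : (𝓝 μ ⊓ Filter.map u atTop).NeBot := hμ
    rwa [inf_comm] at h1
  set 𝒰 : Ultrafilter ℕ := Ultrafilter.of (atTop ⊓ Filter.comap u (𝓝 μ)) with h𝒰
  have h𝒰le : (𝒰 : Filter ℕ) ≤ atTop ⊓ Filter.comap u (𝓝 μ) := Ultrafilter.of_le _
  have h𝒰top : (𝒰 : Filter ℕ) ≤ atTop := h𝒰le.trans inf_le_left
  have h𝒰u : Tendsto u (𝒰 : Filter ℕ) (𝓝 μ) :=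
    (Filter.map_mono (h𝒰le.trans inf_le_right)).trans Filter.map_comap_le
  set 𝒱 : Ultrafilter (ProbabilityMeasure X) := 𝒰.map v with h𝒱
  set ν : ProbabilityMeasure X := limProb 𝒱 with hνdef
  have h𝒱eq : (𝒱 : Filter (ProbabilityMeasure X)) = Filter.map v (𝒰 : Filter ℕ) :=
    Ultrafilter.coe_map v 𝒰
  have htendv : Tendsto v (𝒰 : Filter ℕ) (𝓝 ν) := by
    have h2 := tendsto_limProb 𝒱
    rw [h𝒱eq] at h2
    exact Filter.tendsto_map'_iff.mp h2
  refine ⟨ν, ?_, ?_⟩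
  · rw [mapClusterPt_def]
    have h3 : MapClusterPt ν (𝒰 : Filter ℕ) v := htendv.mapClusterPt
    rw [mapClusterPt_def] at h3
    exact h3.mono (Filter.map_mono h𝒰top)
  · refine le_of_forall_pos_le_add fun s hs => ?_
    have e1 : ∀ᶠ n in (𝒰 : Filter ℕ),
        levyProkhorovDist (v n).toMeasure ν.toMeasure < s / 2 := by
      have := eventually_levyProkhorovDist_lt 𝒱 (half_pos hs)
      rw [h𝒱eq] at this
      exact Filter.eventually_map.mp this
    have e2 : ∀ᶠ n in (𝒰 : Filter ℕ),
        levyProkhorovDist (u n).toMeasure μ.toMeasure < s / 2 := by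
      have hcont := (LevyProkhorov.continuous_ofMeasure_probabilityMeasure (Ω := X)).tendsto μ
      have h4 : Tendsto (fun n => (LevyProkhorov.toMeasureEquiv (α := ProbabilityMeasure X)).symm (u n))
          (𝒰 : Filter ℕ) (𝓝 ((LevyProkhorov.toMeasureEquiv (α := ProbabilityMeasure X)).symm μ)) :=
        hcont.comp h𝒰u
      have h5 := (Metric.tendsto_nhds.mp h4) (s / 2) (half_pos hs)
      exact h5
    have e3 : ∀ᶠ n in (𝒰 : Filter ℕ),
        levyProkhorovDist (u n).toMeasure (v n).toMeasure ≤ t := h𝒰top hclose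
    obtain ⟨n, h1, h2, h3⟩ := (e1.and (e2.and e3)).exists
    calc levyProkhorovDist μ.toMeasure ν.toMeasure
        ≤ levyProkhorovDist μ.toMeasure (u n).toMeasure
          + levyProkhorovDist (u n).toMeasure ν.toMeasure :=
          levyProkhorovDist_triangle _ _ _
      _ ≤ levyProkhorovDist μ.toMeasure (u n).toMeasure
          + (levyProkhorovDist (u n).toMeasure (v n).toMeasure
            + levyProkhorovDist (v n).toMeasure ν.toMeasure) := by
          exact add_le_add le_rfl (levyProkhorovDist_triangle _ _ _)
      _ ≤ s / 2 + (t + s / 2) := by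
          refine add_le_add ?_ (add_le_add h3 h1.le)
          rw [levyProkhorovDist_comm]
          exact h2.le
      _ = t + s := by ring

end Main

end OmegaHatAux

/-- the map `x ↦ ω̂_T(x)` is uniformly continuous from `(X, Ē)` to the
space of sets of invariant measures with the Hausdorff distance induced by the
Prokhorov metric. -/
theorem omegaHat_uniformly_continuous_Ebar {X : Type*} [MetricSpace X] [CompactSpace X]
    [MeasurableSpace X] [BorelSpace X] (T : X → X) (hT : Continuous T) :
    ∀ ε > (0 : ℝ), ∃ δ > (0 : ℝ), ∀ x y : X, Ebar T x y < δ →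
      rhoH (omegaHat T x) (omegaHat T y) < ε := by
  classical
  intro ε hε
  set t : ℝ := ε / 3 with htdef
  have ht : 0 < t := by positivity
  refine ⟨t ^ 2, by positivity, fun x y hxy => ?_⟩
  have hev : ∀ᶠ n in atTop,
      levyProkhorovDist (empProb T x n).toMeasure (empProb T y n).toMeasure ≤ t := by
    have h1 : ∀ᶠ n in atTop, EnDist T n x y < t ^ 2 :=
      OmegaHatAux.eventually_enDist_lt T hxy
    have h2 : ∀ᶠ n in atTop, EnDist T (n + 1) x y < t ^ 2 :=
      (tendsto_add_atTop_nat 1).eventually h1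
    filter_upwards [h2] with n hn
    exact OmegaHatAux.levyProkhorovDist_empProb_le T x y n ht hn
  have hev' : ∀ᶠ n in atTop,
      levyProkhorovDist (empProb T y n).toMeasure (empProb T x n).toMeasure ≤ t := by
    filter_upwards [hev] with n hn
    rwa [levyProkhorovDist_comm]
  have hnn : (0 : ℝ) ≤ t := ht.le
  have hx : ∀ μ ∈ omegaHat T x, (⨅ ν ∈ omegaHat T y, rhoP μ ν) ≤ t := by
    intro μ hμ
    obtain ⟨ν, hν, hd⟩ := OmegaHatAux.exists_mapClusterPt_close hμ hev
    have hbdd : BddBelow (Set.range fun ν' : ProbabilityMeasure X =>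
        ⨅ _ : ν' ∈ omegaHat T y, rhoP μ ν') := by
      refine ⟨0, fun r hr => ?_⟩
      obtain ⟨ν', rfl⟩ := hr
      exact Real.iInf_nonneg fun _ => ENNReal.toReal_nonneg
    calc (⨅ ν' ∈ omegaHat T y, rhoP μ ν') ≤ ⨅ _ : ν ∈ omegaHat T y, rhoP μ ν :=
          ciInf_le hbdd ν
      _ = rhoP μ ν := ciInf_pos hν
      _ ≤ t := hd
  have hy : ∀ ν ∈ omegaHat T y, (⨅ μ ∈ omegaHat T x, rhoP μ ν) ≤ t := by
    intro ν hν
    obtain ⟨μ, hμ, hd⟩ := OmegaHatAux.exists_mapClusterPt_close hν hev'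
    have hbdd : BddBelow (Set.range fun μ' : ProbabilityMeasure X =>
        ⨅ _ : μ' ∈ omegaHat T x, rhoP μ' ν) := by
      refine ⟨0, fun r hr => ?_⟩
      obtain ⟨μ', rfl⟩ := hr
      exact Real.iInf_nonneg fun _ => ENNReal.toReal_nonneg
    calc (⨅ μ' ∈ omegaHat T x, rhoP μ' ν) ≤ ⨅ _ : μ ∈ omegaHat T x, rhoP μ ν :=
          ciInf_le hbdd μ
      _ = rhoP μ ν := ciInf_pos hμ
      _ ≤ t := by rw [rhoP, levyProkhorovDist_comm]; exact hd
  have hsup1 : (⨆ μ ∈ omegaHat T x, ⨅ ν ∈ omegaHat T y, rhoP μ ν) ≤ t :=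
    Real.iSup_le (fun μ => Real.iSup_le (fun hμ => hx μ hμ) hnn) hnn
  have hsup2 : (⨆ ν ∈ omegaHat T y, ⨅ μ ∈ omegaHat T x, rhoP μ ν) ≤ t :=
    Real.iSup_le (fun ν => Real.iSup_le (fun hν => hy ν hν) hnn) hnn
  have hmax : rhoH (omegaHat T x) (omegaHat T y) ≤ t := by
    refine max_le (Real.sSup_le ?_ hnn) (Real.sSup_le ?_ hnn)
    · rintro _ ⟨μ, hμ, rfl⟩
      obtain ⟨ν, hν, hd⟩ := OmegaHatAux.exists_mapClusterPt_close hμ hev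
      have hb : BddBelow ((fun ν' => rhoP μ ν') '' omegaHat T y) :=
        ⟨0, by rintro _ ⟨ν', _, rfl⟩; exact ENNReal.toReal_nonneg⟩
      exact le_trans (csInf_le hb (Set.mem_image_of_mem (fun ν' => rhoP μ ν') hν)) hd
    · rintro _ ⟨ν, hν, rfl⟩
      obtain ⟨μ, hμ, hd⟩ := OmegaHatAux.exists_mapClusterPt_close hν hev'
      have hb : BddBelow ((fun μ' => rhoP μ' ν) '' omegaHat T x) :=
        ⟨0, by rintro _ ⟨μ', _, rfl⟩; exact ENNReal.toReal_nonneg⟩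
      have hd' : rhoP μ ν ≤ t := by rw [rhoP, levyProkhorovDist_comm]; exact hd
      exact le_trans (csInf_le hb (Set.mem_image_of_mem (fun μ' => rhoP μ' ν) hμ)) hd'
  have htε : t < ε := by
    rw [htdef]
    linarith
  exact lt_of_le_of_lt hmax htε
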